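/- Let 1 < p < ∞ and r > 0, and let f : (0,∞) → [0,∞) be measurable. Then (∫_0^∞ (∫_0^x f(y) dy)^p x^{-r-1} dx)^{1/p} ≤ (p/r) (∫_0^∞ (y f(y))^p y^{-r-1} dy)^{1/p}. -/

import Mathlib

open MeasureTheory Set
open scoped ENNReal

/-!
Write `r = s p` and `F(x) = ∫₀ˣ f`. Hölder's inequality on `(0, x]` against the weight
`y ^ (s - 1)` gives `F(x) ^ p ≤ (x ^ s / s) ^ (p - 1) ∫₀ˣ f(y) ^ p y ^ ((1 - s)(p - 1)) dy`,
and multiplying by `x ^ (-r - 1)` leaves the weight `s ^ (1 - p) x ^ (-s - 1)` in front of the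
inner integral. After swapping the order of integration, `∫_y^∞ x ^ (-s - 1) dx = y ^ (-s) / s`
turns the weight into `s ^ (-p) y ^ (p - r - 1)`, and `s⁻¹ = p / r`.
-/

theorem lintegral_Ioc_ofReal_rpow_sub_one {s x : ℝ} (hs : 0 < s) (hx : 0 < x) :
    ∫⁻ y in Ioc 0 x, ENNReal.ofReal (y ^ (s - 1)) = ENNReal.ofReal (x ^ s / s) := by
  have hs' : -1 < s - 1 := by linarith
  have hint : IntegrableOn (fun y : ℝ => y ^ (s - 1)) (Ioc 0 x) := by
    simpa using (intervalIntegral.intervalIntegrable_rpow' hs' (a := 0) (b := x)).1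
  rw [← ofReal_integral_eq_lintegral_ofReal hint]
  · rw [← intervalIntegral.integral_of_le hx.le, integral_rpow (Or.inl hs'), sub_add_cancel,
      Real.zero_rpow hs.ne', sub_zero]
  · filter_upwards [ae_restrict_mem measurableSet_Ioc] with y hy
    exact Real.rpow_nonneg hy.1.le _

theorem lintegral_Ici_ofReal_rpow_neg_sub_one {s y : ℝ} (hs : 0 < s) (hy : 0 < y) :
    ∫⁻ x in Ici y, ENNReal.ofReal (x ^ (-s - 1)) = ENNReal.ofReal (y ^ (-s) / s) := by
  have hs' : -s - 1 < -1 := by linarith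
  rw [← setLIntegral_congr Ioi_ae_eq_Ici,
    ← ofReal_integral_eq_lintegral_ofReal (integrableOn_Ioi_rpow_of_lt hs' hy),
    integral_Ioi_rpow_of_lt hs' hy, sub_add_cancel, neg_div_neg_eq]
  filter_upwards [ae_restrict_mem measurableSet_Ioi] with x hx
  exact Real.rpow_nonneg (hy.trans hx).le _

theorem ENNReal.rpow_lintegral_le_lintegral_mul_rpow_lintegral {α : Type*} [MeasurableSpace α]
    {μ : Measure α} {p : ℝ} (hp : 1 < p) {f w : α → ℝ≥0∞} (hf : AEMeasurable f μ)
    (hw : AEMeasurable w μ) (hw0 : ∀ᵐ a ∂μ, w a ≠ 0) (hwtop : ∀ᵐ a ∂μ, w a ≠ ⊤) :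
    (∫⁻ a, f a ∂μ) ^ p ≤ (∫⁻ a, f a ^ p * w a ^ (1 - p) ∂μ) * (∫⁻ a, w a ∂μ) ^ (p - 1) := by
  have hp0 : 0 < p := zero_lt_one.trans hp
  have hp1 : p - 1 ≠ 0 := (sub_pos.2 hp).ne'
  have hsplit : ∫⁻ a, f a ∂μ
      = ∫⁻ a, ((fun a => f a * w a ^ ((1 - p) / p)) * fun a => w a ^ ((p - 1) / p)) a ∂μ := by
    refine lintegral_congr_ae ?_
    filter_upwards [hw0, hwtop] with a h0 htop
    rw [Pi.mul_apply, mul_assoc, ← ENNReal.rpow_add _ _ h0 htop, ← add_div, sub_add_sub_cancel',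
      sub_self, zero_div, ENNReal.rpow_zero, mul_one]
  have hF (a : α) : (f a * w a ^ ((1 - p) / p)) ^ p = f a ^ p * w a ^ (1 - p) := by
    rw [ENNReal.mul_rpow_of_nonneg _ _ hp0.le, ← ENNReal.rpow_mul, div_mul_cancel₀ _ hp0.ne']
  have hW (a : α) : (w a ^ ((p - 1) / p)) ^ (p / (p - 1)) = w a := by
    rw [← ENNReal.rpow_mul, div_mul_div_cancel₀' hp1, div_self hp0.ne', ENNReal.rpow_one]
  have holder := ENNReal.lintegral_mul_le_Lp_mul_Lq μ (q := p / (p - 1)) (.conjExponent hp)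
    (f := fun a => f a * w a ^ ((1 - p) / p)) (g := fun a => w a ^ ((p - 1) / p))
    (hf.mul (hw.pow_const _)) (hw.pow_const _)
  simp only [hF, hW] at holder
  calc (∫⁻ a, f a ∂μ) ^ p
      ≤ ((∫⁻ a, f a ^ p * w a ^ (1 - p) ∂μ) ^ (1 / p) * (∫⁻ a, w a ∂μ) ^ (1 / (p / (p - 1)))) ^ p :=
        ENNReal.rpow_le_rpow (hsplit ▸ holder) hp0.le
    _ = (∫⁻ a, f a ^ p * w a ^ (1 - p) ∂μ) * (∫⁻ a, w a ∂μ) ^ (p - 1) := by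
        rw [ENNReal.mul_rpow_of_nonneg _ _ hp0.le, ← ENNReal.rpow_mul, ← ENNReal.rpow_mul,
          one_div_mul_cancel hp0.ne', ENNReal.rpow_one, one_div_div, div_mul_cancel₀ _ hp0.ne']

theorem lintegral_Ioi_mul_lintegral_Ioc_swap (a : ℝ) {c h : ℝ → ℝ≥0∞}
    (hc : Measurable c) (hh : Measurable h) :
    ∫⁻ x in Ioi a, c x * ∫⁻ y in Ioc a x, h y
      = ∫⁻ y in Ioi a, h y * ∫⁻ x in Ici y, c x := by
  set K : ℝ → ℝ → ℝ≥0∞ := fun x y => if y ≤ x then c x * h y else 0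
  have hK : Measurable (Function.uncurry K) :=
    Measurable.ite (measurableSet_le measurable_snd measurable_fst)
      ((hc.comp measurable_fst).mul (hh.comp measurable_snd)) measurable_const
  calc ∫⁻ x in Ioi a, c x * ∫⁻ y in Ioc a x, h y
      = ∫⁻ x in Ioi a, ∫⁻ y in Ioi a, K x y := by
        refine lintegral_congr fun x => ?_
        rw [← lintegral_const_mul _ hh, ← Ioi_inter_Iic, inter_comm,
          ← Measure.restrict_restrict measurableSet_Iic, ← lintegral_indicator measurableSet_Iic]
        simp only [K, indicator_apply, mem_Iic]
    _ = ∫⁻ y in Ioi a, ∫⁻ x in Ioi a, K x y := lintegral_lintegral_swap hK.aemeasurable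
    _ = ∫⁻ y in Ioi a, h y * ∫⁻ x in Ici y, c x := by
        refine setLIntegral_congr_fun measurableSet_Ioi fun y hy => ?_
        rw [← lintegral_const_mul _ hc, ← inter_eq_left.2 (Ici_subset_Ioi.2 hy),
          ← Measure.restrict_restrict measurableSet_Ici, ← lintegral_indicator measurableSet_Ici]
        simp only [K, indicator_apply, mem_Ici, mul_comm]

theorem rpow_lintegral_Ioc_le {p s x : ℝ} (hp : 1 < p) (hs : 0 < s) (hx : 0 < x)
    {g : ℝ → ℝ≥0∞} (hg : Measurable g) :
    (∫⁻ y in Ioc 0 x, g y) ^ p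
      ≤ (∫⁻ y in Ioc 0 x, g y ^ p * ENNReal.ofReal (y ^ ((s - 1) * (1 - p))))
        * ENNReal.ofReal (x ^ s / s) ^ (p - 1) := by
  have hw0 : ∀ᵐ y ∂volume.restrict (Ioc 0 x), ENNReal.ofReal (y ^ (s - 1)) ≠ 0 := by
    filter_upwards [ae_restrict_mem measurableSet_Ioc] with y hy
    exact (ENNReal.ofReal_pos.2 (Real.rpow_pos_of_pos hy.1 _)).ne'
  have hweight : ∀ y ∈ Ioc (0 : ℝ) x,
      ENNReal.ofReal (y ^ (s - 1)) ^ (1 - p) = ENNReal.ofReal (y ^ ((s - 1) * (1 - p))) :=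
    fun y hy => by
      rw [ENNReal.ofReal_rpow_of_pos (Real.rpow_pos_of_pos hy.1 _), ← Real.rpow_mul hy.1.le]
  have holder := ENNReal.rpow_lintegral_le_lintegral_mul_rpow_lintegral hp hg.aemeasurable
    (by fun_prop) hw0 (ae_of_all _ fun _ => ENNReal.ofReal_ne_top)
  rw [lintegral_Ioc_ofReal_rpow_sub_one hs hx] at holder
  refine holder.trans_eq (congrArg (· * _) ?_)
  exact setLIntegral_congr_fun measurableSet_Ioc fun y hy => by rw [hweight y hy]

theorem rpow_lintegral_Ioc_mul_rpow_le {p s x : ℝ} (hp : 1 < p) (hs : 0 < s) (hx : 0 < x)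
    {g : ℝ → ℝ≥0∞} (hg : Measurable g) :
    (∫⁻ y in Ioc 0 x, g y) ^ p * ENNReal.ofReal (x ^ (-(s * p) - 1))
      ≤ ENNReal.ofReal (s ^ (1 - p)) * (ENNReal.ofReal (x ^ (-s - 1))
        * ∫⁻ y in Ioc 0 x, g y ^ p * ENNReal.ofReal (y ^ ((s - 1) * (1 - p)))) := by
  have hpow : (x ^ s / s) ^ (p - 1) * x ^ (-(s * p) - 1) = s ^ (1 - p) * x ^ (-s - 1) := by
    rw [Real.div_rpow (by positivity) hs.le, ← Real.rpow_mul hx.le, div_eq_mul_inv,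
      ← Real.rpow_neg hs.le, neg_sub, mul_right_comm, ← Real.rpow_add hx, mul_comm]
    ring_nf
  calc (∫⁻ y in Ioc 0 x, g y) ^ p * ENNReal.ofReal (x ^ (-(s * p) - 1))
      ≤ (∫⁻ y in Ioc 0 x, g y ^ p * ENNReal.ofReal (y ^ ((s - 1) * (1 - p))))
          * ENNReal.ofReal (x ^ s / s) ^ (p - 1) * ENNReal.ofReal (x ^ (-(s * p) - 1)) := by
        gcongr
        exact rpow_lintegral_Ioc_le hp hs hx hg
    _ = _ := by
        rw [ENNReal.ofReal_rpow_of_nonneg (by positivity) (by linarith), mul_assoc,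
          ← ENNReal.ofReal_mul (by positivity), hpow, ENNReal.ofReal_mul (by positivity)]
        ring

theorem ofReal_rpow_mul_lintegral_Ici_rpow_neg_sub_one {p s y : ℝ} (hp : 0 ≤ p) (hs : 0 < s)
    (hy : 0 < y) (b : ℝ≥0∞) :
    ENNReal.ofReal (s ^ (1 - p)) * (b ^ p * ENNReal.ofReal (y ^ ((s - 1) * (1 - p)))
        * ∫⁻ x in Ici y, ENNReal.ofReal (x ^ (-s - 1)))
      = ENNReal.ofReal s⁻¹ ^ p * ((ENNReal.ofReal y * b) ^ p
        * ENNReal.ofReal (y ^ (-(s * p) - 1))) := by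
  have hs' : s ^ (1 - p) / s = s⁻¹ ^ p := by
    rw [Real.rpow_sub hs, Real.rpow_one, Real.inv_rpow hs.le]
    field_simp
  have hy' : y ^ ((s - 1) * (1 - p)) * y ^ (-s) = y ^ p * y ^ (-(s * p) - 1) := by
    rw [← Real.rpow_add hy, ← Real.rpow_add hy]
    ring_nf
  calc _ = b ^ p * ENNReal.ofReal (s ^ (1 - p) * (y ^ ((s - 1) * (1 - p)) * (y ^ (-s) / s))) := by
        rw [lintegral_Ici_ofReal_rpow_neg_sub_one hs hy, ENNReal.ofReal_mul (by positivity),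
          ENNReal.ofReal_mul (by positivity)]
        ring
    _ = b ^ p * ENNReal.ofReal (s⁻¹ ^ p * (y ^ p * y ^ (-(s * p) - 1))) := by
        rw [← hs', ← hy']
        ring_nf
    _ = _ := by
        rw [ENNReal.mul_rpow_of_nonneg _ _ hp, ENNReal.ofReal_rpow_of_nonneg (by positivity) hp,
          ENNReal.ofReal_rpow_of_nonneg hy.le hp, ENNReal.ofReal_mul (by positivity),
          ENNReal.ofReal_mul (by positivity)]
        ring

theorem lintegral_hardy_le {p r : ℝ} (hp : 1 < p) (hr : 0 < r) {g : ℝ → ℝ≥0∞}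
    (hg : Measurable g) :
    ∫⁻ x in Ioi 0, (∫⁻ y in Ioc 0 x, g y) ^ p * ENNReal.ofReal (x ^ (-r - 1))
      ≤ ENNReal.ofReal (p / r) ^ p
        * ∫⁻ y in Ioi 0, (ENNReal.ofReal y * g y) ^ p * ENNReal.ofReal (y ^ (-r - 1)) := by
  have hp0 : 0 < p := zero_lt_one.trans hp
  obtain ⟨s, hs, rfl⟩ : ∃ s, 0 < s ∧ r = s * p := ⟨r / p, div_pos hr hp0, by field_simp⟩
  rw [show p / (s * p) = s⁻¹ by field_simp,
    ← lintegral_const_mul' _ _ (ENNReal.rpow_ne_top_of_nonneg hp0.le ENNReal.ofReal_ne_top)]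
  set G : ℝ → ℝ≥0∞ := fun y => g y ^ p * ENNReal.ofReal (y ^ ((s - 1) * (1 - p)))
  calc ∫⁻ x in Ioi 0, (∫⁻ y in Ioc 0 x, g y) ^ p * ENNReal.ofReal (x ^ (-(s * p) - 1))
      ≤ ∫⁻ x in Ioi 0,
          ENNReal.ofReal (s ^ (1 - p)) * (ENNReal.ofReal (x ^ (-s - 1)) * ∫⁻ y in Ioc 0 x, G y) :=
        setLIntegral_mono' measurableSet_Ioi fun x hx =>
          rpow_lintegral_Ioc_mul_rpow_le hp hs hx hg
    _ = ∫⁻ y in Ioi 0,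
          ENNReal.ofReal (s ^ (1 - p)) * (G y * ∫⁻ x in Ici y, ENNReal.ofReal (x ^ (-s - 1))) := by
        rw [lintegral_const_mul' _ _ ENNReal.ofReal_ne_top,
          lintegral_const_mul' _ _ ENNReal.ofReal_ne_top,
          lintegral_Ioi_mul_lintegral_Ioc_swap 0 (by fun_prop) (by fun_prop)]
    _ = _ := setLIntegral_congr_fun measurableSet_Ioi fun y hy =>
        ofReal_rpow_mul_lintegral_Ici_rpow_neg_sub_one hp0.le hs hy (g y)

theorem stmt1_general (p r : ℝ) (hp : 1 < p) (hr : 0 < r)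
    (f : ℝ → ℝ) (hmeas : Measurable f) :
    (∫⁻ x in Set.Ioi (0 : ℝ),
        (∫⁻ y in Set.Ioc (0 : ℝ) x, ENNReal.ofReal (f y)) ^ p
          * ENNReal.ofReal (x ^ (-r - 1))) ^ (1 / p)
      ≤ ENNReal.ofReal (p / r) *
        (∫⁻ y in Set.Ioi (0 : ℝ),
            (ENNReal.ofReal (y * f y)) ^ p * ENNReal.ofReal (y ^ (-r - 1))) ^ (1 / p) := by
  have hp0 : 0 < p := zero_lt_one.trans hp
  have hofReal_mul : ∀ y ∈ Ioi (0 : ℝ),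
      ENNReal.ofReal (y * f y) ^ p * ENNReal.ofReal (y ^ (-r - 1))
        = (ENNReal.ofReal y * ENNReal.ofReal (f y)) ^ p * ENNReal.ofReal (y ^ (-r - 1)) :=
    fun y hy => by rw [ENNReal.ofReal_mul (le_of_lt hy)]
  calc _ ≤ (ENNReal.ofReal (p / r) ^ p * ∫⁻ y in Ioi 0,
            (ENNReal.ofReal y * ENNReal.ofReal (f y)) ^ p * ENNReal.ofReal (y ^ (-r - 1)))
              ^ (1 / p) :=
        ENNReal.rpow_le_rpow (lintegral_hardy_le hp hr hmeas.ennreal_ofReal) (by positivity)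
    _ = _ := by
        rw [ENNReal.mul_rpow_of_nonneg _ _ (by positivity), one_div, ENNReal.rpow_rpow_inv hp0.ne',
          setLIntegral_congr_fun measurableSet_Ioi hofReal_mul]

/-- Hardy's inequality on the half line with power weight `x^{-r-1}`. -/
theorem stmt1 (p r : ℝ) (hp : 1 < p) (hr : 0 < r)
    (f : ℝ → ℝ) (hmeas : Measurable f) (hpos : ∀ y, 0 ≤ f y) :
    (∫⁻ x in Set.Ioi (0 : ℝ),
        (∫⁻ y in Set.Ioc (0 : ℝ) x, ENNReal.ofReal (f y)) ^ p
          * ENNReal.ofReal (x ^ (-r - 1))) ^ (1 / p)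
      ≤ ENNReal.ofReal (p / r) *
        (∫⁻ y in Set.Ioi (0 : ℝ),
            (ENNReal.ofReal (y * f y)) ^ p * ENNReal.ofReal (y ^ (-r - 1))) ^ (1 / p) :=
  stmt1_general p r hp hr f hmeas
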